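/- A Motzkin tree X is closable (the skeleton of at least one closed de Bruijn lambda term) if and only if either X = l(Y) for some arbitrary Motzkin tree Y, or X = a(Y,Z) where both Y and Z are closable. (This inductive characterization is the context-free grammar generating exactly the closable skeletons.) -/

import Mathlib

/-- Motzkin trees (binary-unary trees): leaf `v`, unary `l`, binary `a`. -/
inductive Mot : Type
  | v : Mot
  | l : Mot → Mot
  | a : Mot → Mot → Mot
deriving DecidableEq

/-- Lambda terms in de Bruijn form. -/
inductive Lam : Type
  | v : Nat → Lam
  | l : Lam → Lam
  | a : Lam → Lam → Lam
deriving DecidableEq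

/-- `t` is closed at depth `d`. -/
def Lam.closedAt : Lam → Nat → Prop
  | .v i, d => i < d
  | .l t, d => t.closedAt (d + 1)
  | .a s t, d => s.closedAt d ∧ t.closedAt d

/-- The Motzkin-tree skeleton of a de Bruijn term. -/
def Lam.skel : Lam → Mot
  | .v _ => .v
  | .l t => .l t.skel
  | .a s t => .a s.skel t.skel

/-- A Motzkin tree is closable if it is the skeleton of at least one closed term. -/
def Mot.Closable (X : Mot) : Prop := ∃ t : Lam, t.closedAt 0 ∧ t.skel = X

namespace Mot

def fill : Mot → Lam
  | v => .v 0
  | l t => .l t.fill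
  | a s t => .a s.fill t.fill

@[simp]
theorem skel_fill (X : Mot) : X.fill.skel = X := by
  induction X <;> simp [fill, Lam.skel, *]

theorem fill_closedAt (X : Mot) {d : ℕ} (hd : 0 < d) : X.fill.closedAt d := by
  induction X generalizing d with
  | v => exact hd
  | l t ih => exact ih d.succ_pos
  | a s t ihs iht => exact ⟨ihs hd, iht hd⟩

theorem not_closable_v : ¬ v.Closable := by
  rintro ⟨t, ht, hskel⟩
  cases t with
  | v i => exact Nat.not_lt_zero i ht
  | l _ | a _ _ => cases hskel

-- Below one abstraction the index `0` is always bound, whatever the shape of the body.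
theorem closable_l (Y : Mot) : (l Y).Closable :=
  ⟨.l Y.fill, Y.fill_closedAt Nat.one_pos, by simp [Lam.skel]⟩

theorem closable_a_iff {Y Z : Mot} : (a Y Z).Closable ↔ Y.Closable ∧ Z.Closable := by
  constructor
  · rintro ⟨(_ | _ | ⟨s, t⟩), hclosed, hskel⟩ <;> cases hskel
    exact ⟨⟨s, hclosed.1, rfl⟩, ⟨t, hclosed.2, rfl⟩⟩
  · rintro ⟨⟨s, hs, rfl⟩, ⟨t, ht, rfl⟩⟩
    exact ⟨.a s t, ⟨hs, ht⟩, rfl⟩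

end Mot

/-- Grammar for closable skeletons: `X` is closable iff `X = l(Y)` for an arbitrary
Motzkin tree `Y`, or `X = a(Y,Z)` with both `Y` and `Z` closable. -/
theorem stmt4 (X : Mot) :
    X.Closable ↔
      (∃ Y : Mot, X = .l Y) ∨
      (∃ Y Z : Mot, X = .a Y Z ∧ Y.Closable ∧ Z.Closable) := by
  cases X with
  | v => simpa using Mot.not_closable_v
  | l Y => simpa using Mot.closable_l Y
  | a Y Z => simpa using Mot.closable_a_iff
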